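/- arXiv:2412.02561 — 3 statements merged into one kernel-verified Lean document; each statement's English description precedes it below -/
import Mathlib

section
/- For any two positive semidefinite Hermitian matrices A and B of the same size, and for every index j, the j-th largest eigenvalue of AB satisfies λ_j(AB) ≤ λ_max(B) · λ_j(A). -/
open Matrix
open scoped ComplexOrder

/-- The positive semidefinite square root of a positive semidefinite matrix
(definition removed from Mathlib; restored with its former meaning). -/
noncomputable def Matrix.PosSemidef.sqrt {n 𝕜 : Type*} [Fintype n] [DecidableEq n] [RCLike 𝕜]
    {A : Matrix n n 𝕜} (hA : A.PosSemidef) : Matrix n n 𝕜 :=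
  hA.1.eigenvectorUnitary.1 * diagonal ((↑) ∘ (√·) ∘ hA.1.eigenvalues) *
  (star hA.1.eigenvectorUnitary : Matrix n n 𝕜)

/-- The `j`-th largest eigenvalue of a Hermitian matrix (eigenvalues sorted decreasingly). -/
noncomputable def eigDesc {n : ℕ} {A : Matrix (Fin n) (Fin n) ℂ} (hA : A.IsHermitian) :
    Fin n → ℝ :=
  fun j => (hA.eigenvalues ∘ ⇑(Tuple.sort hA.eigenvalues)) j.rev

/-!
Write `C = √B`, so that `⟪x, C A C x⟫ = ⟪C x, A (C x)⟫` and `‖C x‖² = ⟪x, B x⟫ ≤ λ_max(B) ‖x‖²`.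
A Courant–Fischer dimension count (`(j + 1) + (n - j) > n`) finds `x ≠ 0` in the span of the top
`j + 1` eigenvectors of `C A C` with `C x` in the span of the eigenvectors of `A` from the `j`-th
on. Then
`λ_j(C A C) ‖x‖² ≤ ⟪x, C A C x⟫ = ⟪C x, A (C x)⟫ ≤ λ_j(A) ‖C x‖² ≤ λ_j(A) λ_max(B) ‖x‖²`.
-/

open Module Finset
open scoped InnerProductSpace

namespace OrthonormalBasis

variable {𝕜 E ι : Type*} [RCLike 𝕜] [NormedAddCommGroup E] [InnerProductSpace 𝕜 E] [Fintype ι]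
  (b : OrthonormalBasis ι 𝕜 E) {T : E →ₗ[𝕜] E} {μ : ι → ℝ}

lemma repr_apply_of_apply_eq_smul (hb : ∀ i, T (b i) = (μ i : 𝕜) • b i) (x : E) (i : ι) :
    b.repr (T x) i = μ i * b.repr x i := by
  classical
  conv_lhs => rw [← b.sum_repr x]
  simp [hb, b.repr_self, Pi.single_apply, RCLike.real_smul_eq_coe_mul, mul_comm]

lemma re_inner_apply_self_eq_sum (hb : ∀ i, T (b i) = (μ i : 𝕜) • b i) (x : E) :
    RCLike.re ⟪x, T x⟫_𝕜 = ∑ i, μ i * ‖b.repr x i‖ ^ 2 := by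
  rw [← b.repr.inner_map_map, PiLp.inner_apply, map_sum]
  refine sum_congr rfl fun i _ => ?_
  rw [repr_apply_of_apply_eq_smul b hb, RCLike.inner_apply, mul_assoc, RCLike.mul_conj]
  norm_cast

lemma norm_sq_eq_sum_norm_sq_repr (x : E) : ‖x‖ ^ 2 = ∑ i, ‖b.repr x i‖ ^ 2 := by
  rw [← b.repr.norm_map, EuclideanSpace.norm_sq_eq]

lemma repr_apply_eq_zero_of_mem_span {s : Finset ι} {x : E} (hx : x ∈ Submodule.span 𝕜 (b '' s))
    {i : ι} (hi : i ∉ s) : b.repr x i = 0 := by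
  classical
  rw [← b.coe_toBasis, Basis.mem_span_image] at hx
  rw [← b.coe_toBasis_repr_apply]
  by_contra h
  exact hi (hx (Finsupp.mem_support_iff.mpr h))

lemma finrank_span_image (s : Finset ι) : finrank 𝕜 (Submodule.span 𝕜 (b '' s)) = #s := by
  rw [Set.image_eq_range]
  exact (finrank_span_eq_card (b.orthonormal.linearIndependent.comp _ Subtype.val_injective)).trans
    (Fintype.card_coe s)

variable {s : Finset ι} {t : ℝ} {x : E}

lemma re_inner_apply_self_le_of_mem_span (hb : ∀ i, T (b i) = (μ i : 𝕜) • b i)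
    (hs : ∀ i ∈ s, μ i ≤ t) (hx : x ∈ Submodule.span 𝕜 (b '' s)) :
    RCLike.re ⟪x, T x⟫_𝕜 ≤ t * ‖x‖ ^ 2 := by
  rw [re_inner_apply_self_eq_sum b hb, norm_sq_eq_sum_norm_sq_repr b, mul_sum]
  refine sum_le_sum fun i _ => ?_
  by_cases hi : i ∈ s
  · exact mul_le_mul_of_nonneg_right (hs i hi) (sq_nonneg _)
  · simp [repr_apply_eq_zero_of_mem_span b hx hi]

lemma le_re_inner_apply_self_of_mem_span (hb : ∀ i, T (b i) = (μ i : 𝕜) • b i)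
    (hs : ∀ i ∈ s, t ≤ μ i) (hx : x ∈ Submodule.span 𝕜 (b '' s)) :
    t * ‖x‖ ^ 2 ≤ RCLike.re ⟪x, T x⟫_𝕜 := by
  have hb' : ∀ i, (-T) (b i) = ((-μ i : ℝ) : 𝕜) • b i := fun i => by simp [hb]
  have := re_inner_apply_self_le_of_mem_span b hb' (fun i hi => neg_le_neg (hs i hi)) hx
  simp only [LinearMap.neg_apply, inner_neg_right, map_neg] at this
  linarith

lemma re_inner_apply_self_le (hb : ∀ i, T (b i) = (μ i : 𝕜) • b i) (hμ : ∀ i, μ i ≤ t) (x : E) :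
    RCLike.re ⟪x, T x⟫_𝕜 ≤ t * ‖x‖ ^ 2 :=
  b.re_inner_apply_self_le_of_mem_span hb (s := univ) (fun i _ => hμ i) <| by
    rw [coe_univ, Set.image_univ, ← b.coe_toBasis, b.toBasis.span_eq]
    exact Submodule.mem_top

end OrthonormalBasis

lemma LinearMap.exists_ne_zero_mem_apply_mem_of_finrank_lt {K V W : Type*} [DivisionRing K]
    [AddCommGroup V] [Module K V] [AddCommGroup W] [Module K W] [FiniteDimensional K V]
    [FiniteDimensional K W] (f : V →ₗ[K] W) {p : Submodule K V} {q : Submodule K W}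
    (h : finrank K W < finrank K p + finrank K q) : ∃ x ∈ p, x ≠ 0 ∧ f x ∈ q := by
  have hker : ker (q.mkQ ∘ₗ f ∘ₗ p.subtype) ≠ ⊥ := by
    refine ker_ne_bot_of_finrank_lt ?_
    have := q.finrank_quotient_add_finrank
    omega
  obtain ⟨⟨x, hxp⟩, hx, hx0⟩ := Submodule.ne_bot_iff _ |>.mp hker
  refine ⟨x, hxp, fun h => hx0 (by simp [h]), ?_⟩
  simpa using hx

theorem eigenvalue_le_mul_eigenvalue_of_re_inner_eq {𝕜 E F : Type*} [RCLike 𝕜]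
    [NormedAddCommGroup E] [InnerProductSpace 𝕜 E] [FiniteDimensional 𝕜 E]
    [NormedAddCommGroup F] [InnerProductSpace 𝕜 F] [FiniteDimensional 𝕜 F] {n : ℕ}
    {T : E →ₗ[𝕜] E} {S : F →ₗ[𝕜] F} {C : E →ₗ[𝕜] F} {μ ν : Fin n → ℝ}
    (b : OrthonormalBasis (Fin n) 𝕜 E) (d : OrthonormalBasis (Fin n) 𝕜 F)
    (hb : ∀ i, T (b i) = (μ i : 𝕜) • b i) (hd : ∀ i, S (d i) = (ν i : 𝕜) • d i)
    (hμ : Antitone μ) (hν : Antitone ν) {c : ℝ}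
    (hTS : ∀ x, RCLike.re ⟪x, T x⟫_𝕜 = RCLike.re ⟪C x, S (C x)⟫_𝕜)
    (hC : ∀ x, ‖C x‖ ^ 2 ≤ c * ‖x‖ ^ 2) {k : Fin n} (hνk : 0 ≤ ν k) : μ k ≤ c * ν k := by
  obtain ⟨x, hxb, hx0, hCx⟩ := C.exists_ne_zero_mem_apply_mem_of_finrank_lt
    (p := Submodule.span 𝕜 (b '' (Iic k))) (q := Submodule.span 𝕜 (d '' (Ici k))) <| by
      rw [b.finrank_span_image, d.finrank_span_image, Fin.card_Iic, Fin.card_Ici,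
        finrank_eq_card_basis d.toBasis, Fintype.card_fin]
      omega
  refine le_of_mul_le_mul_right ?_ (by positivity : 0 < ‖x‖ ^ 2)
  calc μ k * ‖x‖ ^ 2 ≤ RCLike.re ⟪x, T x⟫_𝕜 :=
        b.le_re_inner_apply_self_of_mem_span hb (fun i hi => hμ (mem_Iic.mp hi)) hxb
    _ = RCLike.re ⟪C x, S (C x)⟫_𝕜 := hTS x
    _ ≤ ν k * ‖C x‖ ^ 2 :=
        d.re_inner_apply_self_le_of_mem_span hd (fun i hi => hν (mem_Ici.mp hi)) hCx
    _ ≤ ν k * (c * ‖x‖ ^ 2) := mul_le_mul_of_nonneg_left (hC x) hνk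
    _ = c * ν k * ‖x‖ ^ 2 := by ring

namespace Matrix

variable {𝕜 ι : Type*} [RCLike 𝕜] [Fintype ι] [DecidableEq ι]

lemma inner_toEuclideanLin_conjTranspose_mul {κ : Type*} [Fintype κ] [DecidableEq κ]
    (C A : Matrix κ ι 𝕜) (x : EuclideanSpace 𝕜 ι) :
    ⟪x, toEuclideanLin (Cᴴ * A) x⟫_𝕜 = ⟪toEuclideanLin C x, toEuclideanLin A x⟫_𝕜 := by
  rw [toLpLin_mul _ 2, LinearMap.comp_apply, toEuclideanLin_conjTranspose_eq_adjoint,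
    LinearMap.adjoint_inner_right]

lemma IsHermitian.inner_toEuclideanLin_mul_mul {C : Matrix ι ι 𝕜} (hC : C.IsHermitian)
    (A : Matrix ι ι 𝕜) (x : EuclideanSpace 𝕜 ι) :
    ⟪x, toEuclideanLin (C * A * C) x⟫_𝕜 =
      ⟪toEuclideanLin C x, toEuclideanLin A (toEuclideanLin C x)⟫_𝕜 := by
  nth_rewrite 1 [← hC.eq]
  rw [Matrix.mul_assoc, inner_toEuclideanLin_conjTranspose_mul, toLpLin_mul _ 2,
    LinearMap.comp_apply]

lemma IsHermitian.toEuclideanLin_eigenvectorBasis {M : Matrix ι ι 𝕜} (hM : M.IsHermitian)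
    (i : ι) :
    toEuclideanLin M (hM.eigenvectorBasis i) = (hM.eigenvalues i : 𝕜) • hM.eigenvectorBasis i := by
  apply WithLp.ofLp_injective
  rw [ofLp_toLpLin, toLin'_apply, hM.mulVec_eigenvectorBasis, WithLp.ofLp_smul,
    RCLike.real_smul_eq_coe_smul (K := 𝕜)]

lemma IsHermitian.re_inner_toEuclideanLin_le_iSup_eigenvalues {M : Matrix ι ι 𝕜}
    (hM : M.IsHermitian) (x : EuclideanSpace 𝕜 ι) :
    RCLike.re ⟪x, toEuclideanLin M x⟫_𝕜 ≤ (⨆ i, hM.eigenvalues i) * ‖x‖ ^ 2 :=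
  hM.eigenvectorBasis.re_inner_apply_self_le hM.toEuclideanLin_eigenvectorBasis
    (le_ciSup (Set.finite_range _).bddAbove) x

namespace PosSemidef

variable {B : Matrix ι ι 𝕜} (hB : B.PosSemidef)

lemma sqrt_eq_cfc : hB.sqrt = cfc Real.sqrt B := by
  rw [hB.1.cfc_eq]
  rfl

lemma isHermitian_sqrt : hB.sqrt.IsHermitian := by
  rw [hB.sqrt_eq_cfc]
  exact cfc_predicate _ _

lemma sqrt_mul_self : hB.sqrt * hB.sqrt = B := by
  rw [hB.sqrt_eq_cfc, ← cfc_mul ..]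
  refine (cfc_congr fun x hx => Real.mul_self_sqrt ?_).trans (cfc_id' ℝ B hB.1.isSelfAdjoint)
  open scoped MatrixOrder in exact spectrum_nonneg_of_nonneg hB.nonneg hx

lemma norm_sq_toEuclideanLin_sqrt (x : EuclideanSpace 𝕜 ι) :
    ‖toEuclideanLin hB.sqrt x‖ ^ 2 = RCLike.re ⟪x, toEuclideanLin B x⟫_𝕜 := by
  have h := inner_toEuclideanLin_conjTranspose_mul hB.sqrt hB.sqrt x
  rw [hB.isHermitian_sqrt.eq, hB.sqrt_mul_self] at h
  rw [h, inner_self_eq_norm_sq]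

end PosSemidef

end Matrix

section eigDesc

variable {n : ℕ} {M : Matrix (Fin n) (Fin n) ℂ}

lemma eigDesc_antitone (hM : M.IsHermitian) : Antitone (eigDesc hM) :=
  (Tuple.monotone_sort _).comp_antitone Fin.rev_anti

lemma Matrix.IsHermitian.exists_orthonormalBasis_eigDesc (hM : M.IsHermitian) :
    ∃ b : OrthonormalBasis (Fin n) ℂ (EuclideanSpace ℂ (Fin n)),
      ∀ i, toEuclideanLin M (b i) = (eigDesc hM i : ℂ) • b i :=
  ⟨hM.eigenvectorBasis.reindex (Fin.revPerm.trans (Tuple.sort hM.eigenvalues)).symm, fun i => by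
    rw [OrthonormalBasis.reindex_apply, Equiv.symm_symm]
    exact hM.toEuclideanLin_eigenvectorBasis _⟩

end eigDesc

/-- For PSD Hermitian `A`, `B`, the `j`-th largest eigenvalue of `A * B`
(identified with the eigenvalues of the Hermitian matrix `√B * A * √B`, to which `A * B`
is similar) satisfies `λ_j(AB) ≤ λ_max(B) * λ_j(A)`. -/
theorem eig_mul_le_eigMax_mul {n : ℕ} {A B : Matrix (Fin n) (Fin n) ℂ}
    (hA : A.PosSemidef) (hB : B.PosSemidef)
    (hAB : (hB.sqrt * A * hB.sqrt).IsHermitian) (j : Fin n) :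
    eigDesc hAB j ≤ (⨆ i, hB.1.eigenvalues i) * eigDesc hA.1 j := by
  obtain ⟨b, hb⟩ := hAB.exists_orthonormalBasis_eigDesc
  obtain ⟨d, hd⟩ := hA.1.exists_orthonormalBasis_eigDesc
  refine eigenvalue_le_mul_eigenvalue_of_re_inner_eq b d hb hd (eigDesc_antitone hAB)
    (eigDesc_antitone hA.1) (C := toEuclideanLin hB.sqrt) (fun x => ?_) (fun x => ?_)
    (hA.eigenvalues_nonneg _)
  · rw [hB.isHermitian_sqrt.inner_toEuclideanLin_mul_mul]
  · rw [hB.norm_sq_toEuclideanLin_sqrt]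
    exact hB.1.re_inner_toEuclideanLin_le_iSup_eigenvalues x
end

section
/- Let A be an n×n Hermitian matrix that is not positive definite, and let Ĥ ∈ ℂ^{m×n} be a matrix whose column corresponding to a nonpositive eigenvalue direction of A is nonzero. Then the function f(S) = −ω·log det(I + Ĥ S Ĥ^H) + Tr(A S), with ω > 0, is unbounded below over positive semidefinite matrices S. Specifically, choosing S = P·u·u^H where u is a unit eigenvector of A with eigenvalue λ ≤ 0 and Ĥu ≠ 0, f(S) → −∞ as P → ∞. -/
/-!
Along the ray `S = P • u uᴴ` the matrix determinant lemma gives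
`det (1 + Ĥ S Ĥᴴ) = 1 + P ‖Ĥ u‖²`, and the eigenvector equation gives `Tr (A S) = λ P`.
The objective is therefore `-ω log (1 + P ‖Ĥ u‖²) + λ P`, which tends to `-∞` because
`‖Ĥ u‖² > 0` and `λ ≤ 0`.
-/

open Matrix Filter
open scoped ComplexOrder

namespace Matrix

variable {m n R : Type*} [Fintype n] [CommRing R]

theorem det_one_add_vecMulVec [DecidableEq n] (u v : n → R) :
    det (1 + vecMulVec u v) = 1 + v ⬝ᵥ u := by
  rw [vecMulVec_eq Unit, det_one_add_replicateCol_mul_replicateRow]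

theorem mul_vecMulVec_mul_conjTranspose [StarRing R] (B : Matrix m n R) (u : n → R) :
    B * vecMulVec u (star u) * Bᴴ = vecMulVec (B *ᵥ u) (star (B *ᵥ u)) := by
  rw [mul_vecMulVec, vecMulVec_mul, vecMul_conjTranspose, star_star]

theorem det_one_add_mul_smul_vecMulVec_mul_conjTranspose [Fintype m] [DecidableEq m] [StarRing R]
    (B : Matrix m n R) (u : n → R) (r : R) :
    det (1 + B * (r • vecMulVec u (star u)) * Bᴴ) =
      1 + r * (star (B *ᵥ u) ⬝ᵥ B *ᵥ u) := by
  rw [Matrix.mul_smul, Matrix.smul_mul, mul_vecMulVec_mul_conjTranspose, ← smul_vecMulVec,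
    det_one_add_vecMulVec, dotProduct_smul, smul_eq_mul]

theorem trace_mul_smul_vecMulVec_of_mulVec_eq_smul {A : Matrix n n R} {u : n → R} {μ : R}
    (h : A *ᵥ u = μ • u) (r : R) (w : n → R) :
    trace (A * (r • vecMulVec u w)) = r * μ * (w ⬝ᵥ u) := by
  rw [Matrix.mul_smul, mul_vecMulVec, h, trace_smul, trace_vecMulVec, smul_dotProduct,
    smul_eq_mul, smul_eq_mul, mul_assoc, dotProduct_comm]

end Matrix

theorem tendsto_neg_mul_log_one_add_mul_add_mul_atBot {ω c lam : ℝ} (hω : 0 < ω)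
    (hc : 0 < c) (hlam : lam ≤ 0) :
    Tendsto (fun P => -ω * Real.log (1 + P * c) + lam * P) atTop atBot := by
  have hlog : Tendsto (fun P => Real.log (1 + P * c)) atTop atTop :=
    Real.tendsto_log_atTop.comp (tendsto_atTop_add_const_left _ 1 (tendsto_id.atTop_mul_const hc))
  have hneg : Tendsto (fun P => -ω * Real.log (1 + P * c)) atTop atBot :=
    hlog.const_mul_atTop_of_neg (neg_neg_of_pos hω)
  refine tendsto_atBot_mono' _ ?_ hneg
  filter_upwards [eventually_ge_atTop 0] with P hP
  nlinarith [mul_nonpos_of_nonpos_of_nonneg hlam hP]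

theorem lagrangian_unbounded_below_general {n m : ℕ} {A : Matrix (Fin n) (Fin n) ℂ}
    {Hh : Matrix (Fin m) (Fin n) ℂ} {u : Fin n → ℂ} {lam ω : ℝ}
    (hlam : lam ≤ 0) (heig : A.mulVec u = (lam : ℂ) • u)
    (hunit : star u ⬝ᵥ u = 1) (hHu : Hh.mulVec u ≠ 0) (hω : 0 < ω) :
    (∀ c : ℝ, ∃ S : Matrix (Fin n) (Fin n) ℂ, S.PosSemidef ∧
      -ω * Real.log (((1 + Hh * S * Hhᴴ).det).re) + ((A * S).trace).re < c) ∧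
    Filter.Tendsto
      (fun P : ℝ =>
        -ω * Real.log (((1 + Hh * ((P : ℂ) • vecMulVec u (star u)) * Hhᴴ).det).re)
          + ((A * ((P : ℂ) • vecMulVec u (star u))).trace).re)
      Filter.atTop Filter.atBot := by
  have hgain : 0 < (star (Hh *ᵥ u) ⬝ᵥ Hh *ᵥ u).re :=
    (Complex.pos_iff.mp (dotProduct_star_self_pos_iff.mpr hHu)).1
  have hray : Tendsto
      (fun P : ℝ =>
        -ω * Real.log (((1 + Hh * ((P : ℂ) • vecMulVec u (star u)) * Hhᴴ).det).re)
          + ((A * ((P : ℂ) • vecMulVec u (star u))).trace).re) atTop atBot := by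
    convert tendsto_neg_mul_log_one_add_mul_add_mul_atBot hω hgain hlam using 2 with P
    rw [det_one_add_mul_smul_vecMulVec_mul_conjTranspose,
      trace_mul_smul_vecMulVec_of_mulVec_eq_smul heig, hunit]
    simp [mul_comm]
  refine ⟨fun c => ?_, hray⟩
  obtain ⟨P, hPc, hP⟩ := ((hray.eventually_lt_atBot c).and (eventually_ge_atTop 0)).exists
  exact ⟨_, (posSemidef_vecMulVec_self_star u).smul (Complex.zero_le_real.mpr hP), hPc⟩

/-- If the Hermitian matrix `A` is not positive definite (witnessed by a unit eigenvector `u`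
with eigenvalue `λ ≤ 0` such that `Ĥ u ≠ 0`), then `S ↦ -ω log det(I + Ĥ S Ĥᴴ) + Tr(A S)`
is unbounded below over PSD matrices; specifically it tends to `-∞` along `S = P • u uᴴ`
as `P → ∞`. -/
theorem lagrangian_unbounded_below {n m : ℕ} {A : Matrix (Fin n) (Fin n) ℂ}
    (hA : A.IsHermitian) {Hh : Matrix (Fin m) (Fin n) ℂ} {u : Fin n → ℂ} {lam ω : ℝ}
    (hlam : lam ≤ 0) (heig : A.mulVec u = (lam : ℂ) • u)
    (hunit : star u ⬝ᵥ u = 1) (hHu : Hh.mulVec u ≠ 0) (hω : 0 < ω) :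
    (∀ c : ℝ, ∃ S : Matrix (Fin n) (Fin n) ℂ, S.PosSemidef ∧
      -ω * Real.log (((1 + Hh * S * Hhᴴ).det).re) + ((A * S).trace).re < c) ∧
    Filter.Tendsto
      (fun P : ℝ =>
        -ω * Real.log (((1 + Hh * ((P : ℂ) • vecMulVec u (star u)) * Hhᴴ).det).re)
          + ((A * ((P : ℂ) • vecMulVec u (star u))).trace).re)
      Filter.atTop Filter.atBot :=
  lagrangian_unbounded_below_general hlam heig hunit hHu hω
end

section
/- Suppose Ĥ^H A^{-1/2} = Û Σ̂^{1/2} V̂^H is a reduced SVD with Σ̂ = diag(σ̂₁,…,σ̂_s), σ̂_k > 0, and let D̂ = diag(d̂₁,…,d̂_s) with d̂_k = max(ω/ln 2 − 1/σ̂_k, 0). Then S* = A^{-1/2} V̂ D̂ V̂^H A^{-1/2} is positive semidefinite and log₂ det(I + Ĥ S* Ĥ^H) = Σ_{k=1}^s log₂(1 + σ̂_k d̂_k). -/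
open Matrix
open scoped ComplexOrder

theorem Matrix.PosSemidef.isHermitian_sqrt_s18 {n 𝕜 : Type*} [Fintype n] [DecidableEq n] [RCLike 𝕜]
    {A : Matrix n n 𝕜} (hA : A.PosSemidef) : hA.sqrt.IsHermitian :=
  isHermitian_mul_mul_conjTranspose _ (isHermitian_diagonal_of_self_adjoint _
    (funext fun _ => RCLike.conj_ofReal _))

theorem Matrix.mul_mul_conjTranspose_of_svd {m n s R : Type*} [Fintype n] [Fintype s]
    [DecidableEq s] [Ring R] [StarRing R] {X : Matrix m n R} {U : Matrix m s R}
    {S : Matrix s s R} {V : Matrix n s R} (hX : X = U * S * Vᴴ) (hV : Vᴴ * V = 1)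
    (D : Matrix s s R) : X * (V * D * Vᴴ) * Xᴴ = U * (S * D * Sᴴ) * Uᴴ := by
  have hcancel (M : Matrix s m R) : Vᴴ * (V * M) = M := by
    rw [← Matrix.mul_assoc, hV, Matrix.one_mul]
  subst hX
  simp only [conjTranspose_mul, conjTranspose_conjTranspose, Matrix.mul_assoc, hcancel]

theorem Matrix.det_one_add_mul_diagonal_mul_conjTranspose {m s R : Type*} [Fintype m] [Fintype s]
    [DecidableEq m] [DecidableEq s] [CommRing R] [StarRing R] {U : Matrix m s R}
    (hU : Uᴴ * U = 1) (c : s → R) : (1 + U * diagonal c * Uᴴ).det = ∏ k, (1 + c k) := by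
  rw [Matrix.mul_assoc, det_one_add_mul_comm, Matrix.mul_assoc, hU, Matrix.mul_one,
    ← diagonal_one, diagonal_add, det_diagonal]

theorem Matrix.diagonal_sqrt_mul_diagonal_mul_conjTranspose {s : Type*} [Fintype s] [DecidableEq s]
    {σ : s → ℝ} (hσ : 0 ≤ σ) (d : s → ℝ) :
    diagonal (fun k => (√(σ k) : ℂ)) * diagonal (fun k => (d k : ℂ)) *
      (diagonal (fun k => (√(σ k) : ℂ)))ᴴ = diagonal (fun k => ((σ k * d k : ℝ) : ℂ)) := by
  rw [diagonal_conjTranspose, diagonal_mul_diagonal, diagonal_mul_diagonal]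
  congr 1; funext k
  simp only [Pi.star_apply, Complex.star_def, Complex.conj_ofReal]
  rw [mul_comm, ← mul_assoc, ← Complex.ofReal_mul, Real.mul_self_sqrt (hσ k),
    Complex.ofReal_mul, mul_comm]

theorem optimal_covariance_structure_general {m n s : ℕ} {A : Matrix (Fin n) (Fin n) ℂ}
    (hA : A.PosDef) (Hh : Matrix (Fin m) (Fin n) ℂ)
    (U : Matrix (Fin m) (Fin s) ℂ) (V : Matrix (Fin n) (Fin s) ℂ)
    (σ : Fin s → ℝ) (ω : ℝ) (hσ : ∀ k, 0 < σ k)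
    (hU : Uᴴ * U = 1) (hV : Vᴴ * V = 1)
    (hSVD : Hh * (hA.posSemidef.sqrt)⁻¹ =
      U * Matrix.diagonal (fun k => (Real.sqrt (σ k) : ℂ)) * Vᴴ) :
    ((hA.posSemidef.sqrt)⁻¹ * V *
        Matrix.diagonal (fun k => ((max (ω / Real.log 2 - 1 / σ k) 0 : ℝ) : ℂ)) * Vᴴ *
        (hA.posSemidef.sqrt)⁻¹).PosSemidef ∧
    Real.logb 2
        (((1 + Hh * ((hA.posSemidef.sqrt)⁻¹ * V *
          Matrix.diagonal (fun k => ((max (ω / Real.log 2 - 1 / σ k) 0 : ℝ) : ℂ)) * Vᴴ *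
          (hA.posSemidef.sqrt)⁻¹) * Hhᴴ).det).re) =
      ∑ k, Real.logb 2 (1 + σ k * max (ω / Real.log 2 - 1 / σ k) 0) := by
  set B := (hA.posSemidef.sqrt)⁻¹
  set d : Fin s → ℝ := fun k => max (ω / Real.log 2 - 1 / σ k) 0
  have hB : Bᴴ = B := hA.posSemidef.isHermitian_sqrt_s18.inv
  have hd : 0 ≤ d := fun k => le_max_right _ _
  have hD : (diagonal fun k => (d k : ℂ)).PosSemidef :=
    PosSemidef.diagonal fun k => Complex.zero_le_real.mpr (hd k)
  constructor
  · simpa only [conjTranspose_mul, hB, Matrix.mul_assoc] using hD.mul_mul_conjTranspose_same (B * V)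
  have hgain : Hh * (B * V * diagonal (fun k => (d k : ℂ)) * Vᴴ * B) * Hhᴴ =
      U * diagonal (fun k => ((σ k * d k : ℝ) : ℂ)) * Uᴴ := by
    rw [← diagonal_sqrt_mul_diagonal_mul_conjTranspose (fun k => (hσ k).le),
      ← mul_mul_conjTranspose_of_svd hSVD hV, conjTranspose_mul, hB]
    simp only [Matrix.mul_assoc]
  have hpos : ∀ k, 0 < 1 + σ k * d k := fun k => by
    linarith [mul_nonneg (hσ k).le (hd k)]
  rw [hgain, det_one_add_mul_diagonal_mul_conjTranspose hU]
  simp only [← Complex.ofReal_one, ← Complex.ofReal_add, ← Complex.ofReal_prod, Complex.ofReal_re]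
  exact Real.logb_prod _ _ fun k _ => (hpos k).ne'

/-- Closed-form optimal covariance (Theorem 1): if `Ĥ A^{-1/2} = Û Σ̂^{1/2} V̂ᴴ` is a reduced
SVD with `σ̂ k > 0` and `d̂ k = max (ω / ln 2 - 1 / σ̂ k) 0`, then
`S* = A^{-1/2} V̂ D̂ V̂ᴴ A^{-1/2}` is PSD and
`log₂ det(I + Ĥ S* Ĥᴴ) = ∑ k log₂ (1 + σ̂ k * d̂ k)`. -/
theorem optimal_covariance_structure {m n s : ℕ} {A : Matrix (Fin n) (Fin n) ℂ}
    (hA : A.PosDef) (Hh : Matrix (Fin m) (Fin n) ℂ)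
    (U : Matrix (Fin m) (Fin s) ℂ) (V : Matrix (Fin n) (Fin s) ℂ)
    (σ : Fin s → ℝ) (ω : ℝ) (hω : 0 < ω) (hσ : ∀ k, 0 < σ k)
    (hU : Uᴴ * U = 1) (hV : Vᴴ * V = 1)
    (hSVD : Hh * (hA.posSemidef.sqrt)⁻¹ =
      U * Matrix.diagonal (fun k => (Real.sqrt (σ k) : ℂ)) * Vᴴ) :
    ((hA.posSemidef.sqrt)⁻¹ * V *
        Matrix.diagonal (fun k => ((max (ω / Real.log 2 - 1 / σ k) 0 : ℝ) : ℂ)) * Vᴴ *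
        (hA.posSemidef.sqrt)⁻¹).PosSemidef ∧
    Real.logb 2
        (((1 + Hh * ((hA.posSemidef.sqrt)⁻¹ * V *
          Matrix.diagonal (fun k => ((max (ω / Real.log 2 - 1 / σ k) 0 : ℝ) : ℂ)) * Vᴴ *
          (hA.posSemidef.sqrt)⁻¹) * Hhᴴ).det).re) =
      ∑ k, Real.logb 2 (1 + σ k * max (ω / Real.log 2 - 1 / σ k) 0) :=
  optimal_covariance_structure_general hA Hh U V σ ω hσ hU hV hSVD
end
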